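/- Fix integers ℓ ≥ 1, m ≥ 1 and set n = 2^ℓ·m. Let H, Ĥ be n×n real matrices and ε ≥ 0. Assume that for every level k ∈ {1,…,ℓ}, every sibling off-diagonal block satisfies ‖Ĥ_{ij}^{(k)} − H_{ij}^{(k)}‖_F ≤ (2^{1−k/2} + 1)·ε·‖H‖_F, and for every i ∈ {1,…,2^ℓ}, the level-ℓ diagonal blocks satisfy ‖Ĥ_{ii}^{(ℓ)} − H_{ii}^{(ℓ)}‖_F ≤ ε·‖H‖_F. Then ‖Ĥ − H‖_F ≤ (√2 + 1)·√(2^{ℓ+1} + 2^{ℓ−1})·ε·‖H‖_F. -/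
import Mathlib


/-- Frobenius norm of a real matrix: `‖M‖_F = (Σ_{i,j} m_{ij}²)^{1/2}`. -/
noncomputable def frob {α β : Type*} [Fintype α] [Fintype β] (A : Matrix α β ℝ) : ℝ :=
  Real.sqrt (∑ i, ∑ j, (A i j) ^ 2)

/-- For an `n × n` matrix with `n = 2^ℓ·m`, the level-`k` block `M_{ij}^{(k)}`
(0-based block indices `i, j`): the square submatrix of size `2^(ℓ-k)·m` whose
rows are `{i·2^(ℓ-k)·m, …, (i+1)·2^(ℓ-k)·m − 1}` and whose columns are
`{j·2^(ℓ-k)·m, …, (j+1)·2^(ℓ-k)·m − 1}` (and `0` outside the index range, which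
never occurs for valid block indices `i, j < 2^k`). -/
def blk (ℓ m : ℕ) (M : Matrix (Fin (2 ^ ℓ * m)) (Fin (2 ^ ℓ * m)) ℝ) (k i j : ℕ) :
    Matrix (Fin (2 ^ (ℓ - k) * m)) (Fin (2 ^ (ℓ - k) * m)) ℝ :=
  Matrix.of fun a b =>
    if h : i * (2 ^ (ℓ - k) * m) + a.val < 2 ^ ℓ * m ∧
           j * (2 ^ (ℓ - k) * m) + b.val < 2 ^ ℓ * m then
      M ⟨i * (2 ^ (ℓ - k) * m) + a.val, h.1⟩ ⟨j * (2 ^ (ℓ - k) * m) + b.val, h.2⟩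
    else 0

namespace HodlrAux

noncomputable def ent (ℓ m : ℕ) (X : Matrix (Fin (2 ^ ℓ * m)) (Fin (2 ^ ℓ * m)) ℝ)
    (p q : ℕ) : ℝ :=
  if h : p < 2 ^ ℓ * m ∧ q < 2 ^ ℓ * m then (X ⟨p, h.1⟩ ⟨q, h.2⟩) ^ 2 else 0

lemma ent_nonneg (ℓ m : ℕ) (X : Matrix (Fin (2 ^ ℓ * m)) (Fin (2 ^ ℓ * m)) ℝ) (p q : ℕ) :
    0 ≤ ent ℓ m X p q := by
  unfold ent; split <;> positivity

noncomputable def Fsq (ℓ m : ℕ) (X : Matrix (Fin (2 ^ ℓ * m)) (Fin (2 ^ ℓ * m)) ℝ)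
    (k i j : ℕ) : ℝ :=
  ∑ a ∈ Finset.range (2 ^ (ℓ - k) * m), ∑ b ∈ Finset.range (2 ^ (ℓ - k) * m),
    ent ℓ m X (i * (2 ^ (ℓ - k) * m) + a) (j * (2 ^ (ℓ - k) * m) + b)

lemma Fsq_eq (ℓ m : ℕ) (X : Matrix (Fin (2 ^ ℓ * m)) (Fin (2 ^ ℓ * m)) ℝ) (k i j : ℕ) :
    Fsq ℓ m X k i j = frob (blk ℓ m X k i j) ^ 2 := by
  unfold Fsq frob
  rw [Real.sq_sqrt (by positivity)]
  rw [Finset.sum_range]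
  refine Finset.sum_congr rfl fun a _ => ?_
  rw [Finset.sum_range]
  refine Finset.sum_congr rfl fun b _ => ?_
  simp only [ent, blk, Matrix.of_apply]
  split <;> simp

lemma Fsq_nonneg (ℓ m : ℕ) (X : Matrix (Fin (2 ^ ℓ * m)) (Fin (2 ^ ℓ * m)) ℝ) (k i j : ℕ) :
    0 ≤ Fsq ℓ m X k i j := by
  apply Finset.sum_nonneg; intro a _; apply Finset.sum_nonneg; intro b _
  exact ent_nonneg ℓ m X _ _

lemma sum_two_mul (n : ℕ) (g : ℕ → ℝ) :
    ∑ i ∈ Finset.range (2 * n), g i = ∑ t ∈ Finset.range n, (g (2 * t) + g (2 * t + 1)) := by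
  induction n with
  | zero => simp
  | succ n ih =>
    rw [show 2 * (n + 1) = (2 * n + 1) + 1 by ring, Finset.sum_range_succ,
      Finset.sum_range_succ, ih, Finset.sum_range_succ]
    ring

lemma quad (ℓ m : ℕ) (X : Matrix (Fin (2 ^ ℓ * m)) (Fin (2 ^ ℓ * m)) ℝ)
    (k t : ℕ) (hk : 1 ≤ k) (hkℓ : k ≤ ℓ) :
    Fsq ℓ m X (k - 1) t t =
      Fsq ℓ m X k (2 * t) (2 * t) + Fsq ℓ m X k (2 * t) (2 * t + 1)
        + Fsq ℓ m X k (2 * t + 1) (2 * t) + Fsq ℓ m X k (2 * t + 1) (2 * t + 1) := by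
  set s := 2 ^ (ℓ - k) * m with hsdef
  have hs : 2 ^ (ℓ - (k - 1)) * m = s + s := by
    have h1 : ℓ - (k - 1) = (ℓ - k) + 1 := by omega
    rw [h1, pow_succ, hsdef]; ring
  unfold Fsq
  rw [hs]
  simp only [Finset.sum_range_add]
  simp only [Finset.sum_add_distrib]
  have h1 : ∀ a : ℕ, t * (s + s) + a = 2 * t * s + a := fun a => by ring
  have h2 : ∀ b : ℕ, 2 * t * s + (s + b) = (2 * t + 1) * s + b := fun b => by ring
  simp only [h1, h2]
  ring

lemma level (ℓ m : ℕ) (X : Matrix (Fin (2 ^ ℓ * m)) (Fin (2 ^ ℓ * m)) ℝ)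
    (k : ℕ) (hk : 1 ≤ k) (hkℓ : k ≤ ℓ) :
    ∑ i ∈ Finset.range (2 ^ (k - 1)), Fsq ℓ m X (k - 1) i i
      = ∑ i ∈ Finset.range (2 ^ k), Fsq ℓ m X k i i
        + ∑ t ∈ Finset.range (2 ^ (k - 1)),
            (Fsq ℓ m X k (2 * t) (2 * t + 1) + Fsq ℓ m X k (2 * t + 1) (2 * t)) := by
  have h2k : 2 ^ k = 2 * 2 ^ (k - 1) := by
    conv_lhs => rw [show k = (k - 1) + 1 by omega]
    rw [pow_succ]; ring
  rw [h2k, sum_two_mul]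
  rw [← Finset.sum_add_distrib]
  refine Finset.sum_congr rfl fun t _ => ?_
  rw [quad ℓ m X k t hk hkℓ]; ring

lemma telescope (ℓ m : ℕ) (X : Matrix (Fin (2 ^ ℓ * m)) (Fin (2 ^ ℓ * m)) ℝ) :
    ∀ j, j ≤ ℓ →
      Fsq ℓ m X 0 0 0 = ∑ i ∈ Finset.range (2 ^ j), Fsq ℓ m X j i i
        + ∑ k ∈ Finset.Icc 1 j, ∑ t ∈ Finset.range (2 ^ (k - 1)),
            (Fsq ℓ m X k (2 * t) (2 * t + 1) + Fsq ℓ m X k (2 * t + 1) (2 * t)) := by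
  intro j
  induction j with
  | zero => intro _; simp
  | succ j ih =>
    intro hj
    rw [ih (by omega), Finset.sum_Icc_succ_top (by omega)]
    have h := level ℓ m X (j + 1) (by omega) hj
    simp only [Nat.add_sub_cancel] at h ⊢
    rw [h]; ring

lemma blk_zero (ℓ m : ℕ) (X : Matrix (Fin (2 ^ ℓ * m)) (Fin (2 ^ ℓ * m)) ℝ) :
    blk ℓ m X 0 0 0 = X := by
  ext a b
  simp only [blk, Matrix.of_apply, Nat.sub_zero, zero_mul, zero_add]
  rw [dif_pos ⟨a.isLt, b.isLt⟩]
  rfl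

lemma blk_sub (ℓ m : ℕ) (A B : Matrix (Fin (2 ^ ℓ * m)) (Fin (2 ^ ℓ * m)) ℝ) (k i j : ℕ) :
    blk ℓ m (A - B) k i j = blk ℓ m A k i j - blk ℓ m B k i j := by
  ext a b
  simp only [blk, Matrix.of_apply, Matrix.sub_apply]
  split <;> simp

lemma pow_sum : ∀ L : ℕ, ∑ k ∈ Finset.Icc 1 L, (2 : ℝ) ^ (k - 1) = 2 ^ L - 1
  | 0 => by simp
  | (L + 1) => by
      rw [Finset.sum_Icc_succ_top (by omega), pow_sum L, Nat.add_sub_cancel, pow_succ]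
      ring

end HodlrAux

open HodlrAux

/-- Global representation error bound achieved by the adaptive-precision HODLR
construction: if every level-`k` sibling off-diagonal block of `Ĥ` is within
`(2^(1−k/2) + 1)·ε·‖H‖_F` of the corresponding block of `H` and every level-`ℓ`
diagonal block is within `ε·‖H‖_F`, then
`‖Ĥ − H‖_F ≤ (√2 + 1)·√(2^(ℓ+1) + 2^(ℓ−1))·ε·‖H‖_F`. -/
theorem hodlr_adaptive_precision_representation_error (ℓ m : ℕ) (hℓ : 1 ≤ ℓ) (hm : 1 ≤ m)
    (ε : ℝ) (hε : 0 ≤ ε)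
    (H Hh : Matrix (Fin (2 ^ ℓ * m)) (Fin (2 ^ ℓ * m)) ℝ)
    (hoff : ∀ k, 1 ≤ k → k ≤ ℓ → ∀ t < 2 ^ (k - 1),
      frob (blk ℓ m Hh k (2 * t) (2 * t + 1) - blk ℓ m H k (2 * t) (2 * t + 1))
        ≤ (2 / Real.sqrt ((2 : ℝ) ^ k) + 1) * ε * frob H ∧
      frob (blk ℓ m Hh k (2 * t + 1) (2 * t) - blk ℓ m H k (2 * t + 1) (2 * t))
        ≤ (2 / Real.sqrt ((2 : ℝ) ^ k) + 1) * ε * frob H)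
    (hdiag : ∀ i < 2 ^ ℓ,
      frob (blk ℓ m Hh ℓ i i - blk ℓ m H ℓ i i) ≤ ε * frob H) :
    frob (Hh - H)
      ≤ (Real.sqrt 2 + 1) * Real.sqrt ((2 : ℝ) ^ (ℓ + 1) + (2 : ℝ) ^ (ℓ - 1)) * ε * frob H := by
  set X := Hh - H with hXdef
  have hfH : 0 ≤ frob H := Real.sqrt_nonneg _
  set C := ε * frob H with hCdef
  have hC0 : 0 ≤ C := mul_nonneg hε hfH
  have frob_nonneg : ∀ {α β : Type} [Fintype α] [Fintype β] (A : Matrix α β ℝ),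
      0 ≤ frob A := fun A => Real.sqrt_nonneg _
  -- key decomposition
  have key := telescope ℓ m X ℓ le_rfl
  -- diagonal bound
  have hdiagsum : ∑ i ∈ Finset.range (2 ^ ℓ), Fsq ℓ m X ℓ i i ≤ (2 : ℝ) ^ ℓ * C ^ 2 := by
    calc ∑ i ∈ Finset.range (2 ^ ℓ), Fsq ℓ m X ℓ i i
        ≤ ∑ _i ∈ Finset.range (2 ^ ℓ), C ^ 2 := by
          refine Finset.sum_le_sum fun i hi => ?_
          rw [Fsq_eq, hXdef, blk_sub]
          exact pow_le_pow_left₀ (frob_nonneg _) (hdiag i (Finset.mem_range.mp hi)) 2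
      _ = (2 : ℝ) ^ ℓ * C ^ 2 := by
          rw [Finset.sum_const, Finset.card_range, nsmul_eq_mul]
          push_cast; ring
  -- off-diagonal bound per block
  have hoffblk : ∀ k, 1 ≤ k → k ≤ ℓ → ∀ t < 2 ^ (k - 1),
      Fsq ℓ m X k (2 * t) (2 * t + 1) + Fsq ℓ m X k (2 * t + 1) (2 * t) ≤ 12 * C ^ 2 := by
    intro k hk hkℓ t ht
    obtain ⟨h1, h2⟩ := hoff k hk hkℓ t ht
    have hcoef : (2 / Real.sqrt ((2 : ℝ) ^ k) + 1) ≤ Real.sqrt 2 + 1 := by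
      have hle : Real.sqrt 2 ≤ Real.sqrt ((2 : ℝ) ^ k) := by
        apply Real.sqrt_le_sqrt
        calc (2 : ℝ) = 2 ^ 1 := (pow_one 2).symm
          _ ≤ 2 ^ k := by
              apply pow_le_pow_right₀ (by norm_num) hk
      have hpos : 0 < Real.sqrt 2 := by positivity
      have : 2 / Real.sqrt ((2 : ℝ) ^ k) ≤ 2 / Real.sqrt 2 :=
        div_le_div_of_nonneg_left (by norm_num) hpos hle
      rw [Real.div_sqrt] at this
      linarith
    have hsqrt2 : Real.sqrt 2 ^ 2 = 2 := Real.sq_sqrt (by norm_num)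
    have hcoefsq : (Real.sqrt 2 + 1) ^ 2 ≤ 6 := by
      nlinarith [hsqrt2, sq_nonneg (Real.sqrt 2 - 1.5)]
    have hbnd : ∀ Y : Matrix (Fin (2 ^ ℓ * m)) (Fin (2 ^ ℓ * m)) ℝ, ∀ i j : ℕ,
        frob (blk ℓ m Hh k i j - blk ℓ m H k i j) ≤ (2 / Real.sqrt ((2 : ℝ) ^ k) + 1) * ε * frob H →
        Fsq ℓ m X k i j ≤ 6 * C ^ 2 := by
      intro Y i j hY
      rw [Fsq_eq, hXdef, blk_sub]
      calc frob (blk ℓ m Hh k i j - blk ℓ m H k i j) ^ 2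
          ≤ ((Real.sqrt 2 + 1) * C) ^ 2 := by
            apply pow_le_pow_left₀ (frob_nonneg _)
            calc frob (blk ℓ m Hh k i j - blk ℓ m H k i j)
                ≤ (2 / Real.sqrt ((2 : ℝ) ^ k) + 1) * ε * frob H := hY
              _ = (2 / Real.sqrt ((2 : ℝ) ^ k) + 1) * C := by rw [hCdef]; ring
              _ ≤ (Real.sqrt 2 + 1) * C := mul_le_mul_of_nonneg_right hcoef hC0
        _ = (Real.sqrt 2 + 1) ^ 2 * C ^ 2 := by ring
        _ ≤ 6 * C ^ 2 := mul_le_mul_of_nonneg_right hcoefsq (sq_nonneg C)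
    have e1 := hbnd X (2 * t) (2 * t + 1) h1
    have e2 := hbnd X (2 * t + 1) (2 * t) h2
    linarith
  -- sum of off-diagonal contributions
  have hoffsum : ∑ k ∈ Finset.Icc 1 ℓ, ∑ t ∈ Finset.range (2 ^ (k - 1)),
      (Fsq ℓ m X k (2 * t) (2 * t + 1) + Fsq ℓ m X k (2 * t + 1) (2 * t))
      ≤ (2 : ℝ) ^ ℓ * (12 * C ^ 2) := by
    calc ∑ k ∈ Finset.Icc 1 ℓ, ∑ t ∈ Finset.range (2 ^ (k - 1)),
        (Fsq ℓ m X k (2 * t) (2 * t + 1) + Fsq ℓ m X k (2 * t + 1) (2 * t))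
        ≤ ∑ k ∈ Finset.Icc 1 ℓ, (2 : ℝ) ^ (k - 1) * (12 * C ^ 2) := by
          refine Finset.sum_le_sum fun k hk => ?_
          obtain ⟨hk1, hk2⟩ := Finset.mem_Icc.mp hk
          calc ∑ t ∈ Finset.range (2 ^ (k - 1)),
              (Fsq ℓ m X k (2 * t) (2 * t + 1) + Fsq ℓ m X k (2 * t + 1) (2 * t))
              ≤ ∑ _t ∈ Finset.range (2 ^ (k - 1)), 12 * C ^ 2 :=
                Finset.sum_le_sum fun t ht =>
                  hoffblk k hk1 hk2 t (Finset.mem_range.mp ht)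
            _ = (2 : ℝ) ^ (k - 1) * (12 * C ^ 2) := by
                rw [Finset.sum_const, Finset.card_range, nsmul_eq_mul]
                push_cast; ring
      _ = (∑ k ∈ Finset.Icc 1 ℓ, (2 : ℝ) ^ (k - 1)) * (12 * C ^ 2) := by
          rw [Finset.sum_mul]
      _ ≤ (2 : ℝ) ^ ℓ * (12 * C ^ 2) := by
          rw [pow_sum ℓ]
          have : (0 : ℝ) ≤ 12 * C ^ 2 := by positivity
          nlinarith
  -- total bound
  have hS : Fsq ℓ m X 0 0 0 ≤ 13 * (2 : ℝ) ^ ℓ * C ^ 2 := by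
    rw [key]; nlinarith [hdiagsum, hoffsum]
  -- relate to frob X
  have hfrobX : frob X ^ 2 = Fsq ℓ m X 0 0 0 := by
    rw [Fsq_eq, blk_zero]
  set T := (Real.sqrt 2 + 1) * Real.sqrt ((2 : ℝ) ^ (ℓ + 1) + (2 : ℝ) ^ (ℓ - 1)) * ε * frob H
    with hT
  have hT0 : 0 ≤ T := by
    rw [hT]
    have := Real.sqrt_nonneg 2
    have := Real.sqrt_nonneg ((2 : ℝ) ^ (ℓ + 1) + (2 : ℝ) ^ (ℓ - 1))
    positivity
  have hTsq : 13 * (2 : ℝ) ^ ℓ * C ^ 2 ≤ T ^ 2 := by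
    have harg : (0 : ℝ) ≤ (2 : ℝ) ^ (ℓ + 1) + (2 : ℝ) ^ (ℓ - 1) := by positivity
    have hTsq' : T ^ 2 = (Real.sqrt 2 + 1) ^ 2
        * ((2 : ℝ) ^ (ℓ + 1) + (2 : ℝ) ^ (ℓ - 1)) * C ^ 2 := by
      rw [hT, hCdef]
      rw [show ((Real.sqrt 2 + 1) * Real.sqrt ((2 : ℝ) ^ (ℓ + 1) + (2 : ℝ) ^ (ℓ - 1)) * ε
          * frob H) ^ 2 = (Real.sqrt 2 + 1) ^ 2
          * Real.sqrt ((2 : ℝ) ^ (ℓ + 1) + (2 : ℝ) ^ (ℓ - 1)) ^ 2 * (ε * frob H) ^ 2 by ring]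
      rw [Real.sq_sqrt harg]
    rw [hTsq']
    have hpow1 : (2 : ℝ) ^ (ℓ + 1) = 2 * (2 : ℝ) ^ ℓ := by rw [pow_succ]; ring
    have hpow2 : (2 : ℝ) ^ (ℓ - 1) * 2 = (2 : ℝ) ^ ℓ := by
      rw [← pow_succ]; congr 1; omega
    have hsqrt2 : Real.sqrt 2 ^ 2 = 2 := Real.sq_sqrt (by norm_num)
    have hr : (1.4 : ℝ) ≤ Real.sqrt 2 := by
      nlinarith [hsqrt2, Real.sqrt_nonneg 2]
    have hP : (0 : ℝ) ≤ (2 : ℝ) ^ ℓ := by positivity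
    have h58 : (5.8 : ℝ) ≤ (Real.sqrt 2 + 1) ^ 2 := by nlinarith [hr, hsqrt2]
    have hlin : 13 * (2 : ℝ) ^ ℓ ≤ 5.8 * ((2 : ℝ) ^ (ℓ + 1) + (2 : ℝ) ^ (ℓ - 1)) := by
      rw [hpow1]; linarith [hpow2]
    calc 13 * (2 : ℝ) ^ ℓ * C ^ 2
        ≤ 5.8 * ((2 : ℝ) ^ (ℓ + 1) + (2 : ℝ) ^ (ℓ - 1)) * C ^ 2 :=
          mul_le_mul_of_nonneg_right hlin (sq_nonneg C)
      _ ≤ (Real.sqrt 2 + 1) ^ 2 * ((2 : ℝ) ^ (ℓ + 1) + (2 : ℝ) ^ (ℓ - 1)) * C ^ 2 :=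
          mul_le_mul_of_nonneg_right (mul_le_mul_of_nonneg_right h58 harg) (sq_nonneg C)
  have hfinal : frob X ^ 2 ≤ T ^ 2 := by rw [hfrobX]; linarith
  nlinarith [frob_nonneg X, hT0, hfinal]
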